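/- Let X be an arithmetic scheme whose underlying topological space has Krull dimension at most 1. Then the set X(ℂ) of scheme morphisms Spec ℂ → X is finite. -/

import Mathlib

/-!
A complex point of `X` lands in one of finitely many affine opens `Spec A`, where `A` is a
finitely generated `ℤ`-algebra of dimension at most one, so it suffices that `A` has finitely many
ring homomorphisms to `ℂ`; each of them factors through `ℚ ⊗[ℤ] A`. By Zariski's lemma over the
Jacobson ring `ℤ`, every maximal ideal of `A` contains a nonzero integer, so the primes of
`ℚ ⊗[ℤ] A` come from non-maximal, hence minimal, primes of `A`. Thus `ℚ ⊗[ℤ] A` is Noetherian of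
dimension zero, i.e. Artinian, hence finite-dimensional over `ℚ`, and such an algebra has only
finitely many homomorphisms to a field.
-/

open AlgebraicGeometry CategoryTheory

/-- An arithmetic scheme: a scheme that is separated and of finite type over `Spec ℤ`. -/
def IsArithmeticScheme (X : Scheme.{0}) : Prop :=
  ∃ f : X ⟶ Spec (CommRingCat.of ℤ),
    IsSeparated f ∧ LocallyOfFiniteType f ∧ QuasiCompact f

instance Int.isJacobsonRing : IsJacobsonRing ℤ := by
  refine isJacobsonRing_iff_prime_eq.mpr fun P hP ↦ ?_
  obtain rfl | hP0 := eq_or_ne P ⊥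
  · refine le_antisymm (fun x hx ↦ ?_) Ideal.le_jacobson
    rcases Int.isUnit_iff.mp (Ideal.mem_jacobson_bot.mp hx x) with h | h <;>
      simp [show x = 0 by nlinarith]
  · have := hP.isMaximal_of_ne_bot hP0
    exact Ideal.jacobson_eq_self_of_isMaximal

lemma Ideal.exists_intCast_mem_of_isMaximal {A : Type*} [CommRing A] [Algebra.FiniteType ℤ A]
    (m : Ideal A) [m.IsMaximal] : ∃ n : ℤ, n ≠ 0 ∧ (n : A) ∈ m := by
  let := Ideal.Quotient.field m
  have : Module.Finite ℤ (A ⧸ m) := finite_of_finite_type_of_isJacobsonRing ℤ _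
  by_contra! h
  refine Int.not_isField (isField_of_isIntegral_of_isField (S := A ⧸ m) ?_ (Field.toIsField _))
  refine (injective_iff_map_eq_zero _).mpr fun n hn ↦ ?_
  by_contra hn0
  exact h n hn0 (Ideal.Quotient.eq_zero_iff_mem.mp (by simpa using hn))

lemma Ring.krullDimLE_zero_of_isLocalization {A L : Type*} [CommRing A] [CommRing L]
    [Algebra A L] [Ring.KrullDimLE 1 A] (M : Submonoid A) [IsLocalization M L]
    (hM : ∀ m : Ideal A, m.IsMaximal → ¬ Disjoint (M : Set A) m) : Ring.KrullDimLE 0 L := by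
  refine .mk₀ fun Q hQ ↦ ?_
  obtain ⟨N, hN, hQN⟩ := Ideal.exists_le_maximal Q hQ.ne_top
  obtain ⟨hNprime, hNdisj⟩ := (IsLocalization.isPrime_iff_isPrime_disjoint M L N).mp hN.isPrime
  have hNmin : N.under A ∈ minimalPrimes A :=
    (Ring.krullDimLE_one_iff.mp ‹_› _ hNprime).resolve_right fun h ↦ hM _ h hNdisj
  have hQprime := ((IsLocalization.isPrime_iff_isPrime_disjoint M L Q).mp hQ).1
  have hQN_under : Q.under A = N.under A :=
    le_antisymm (Ideal.comap_mono hQN) (hNmin.2 ⟨hQprime, bot_le⟩ (Ideal.comap_mono hQN))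
  rwa [← IsLocalization.map_under M L Q, hQN_under, IsLocalization.map_under M L N]

section RationalTensor

open scoped TensorProduct

variable (A : Type*) [CommRing A] [Algebra.FiniteType ℤ A] [Ring.KrullDimLE 1 A]

-- As an `A`-algebra, `ℚ ⊗[ℤ] A` is the localization of `A` at the nonzero integers.
attribute [local instance] Algebra.TensorProduct.rightAlgebra in
instance krullDimLE_zero_rat_tensorProduct : Ring.KrullDimLE 0 (ℚ ⊗[ℤ] A) :=
  Ring.krullDimLE_zero_of_isLocalization (Algebra.algebraMapSubmonoid A (nonZeroDivisors ℤ))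
    fun m _ ↦ by
      obtain ⟨n, hn0, hnm⟩ := m.exists_intCast_mem_of_isMaximal
      exact Set.not_disjoint_iff.mpr ⟨n, ⟨n, mem_nonZeroDivisors_of_ne_zero hn0, by simp⟩, hnm⟩

instance finite_rat_tensorProduct : Module.Finite ℚ (ℚ ⊗[ℤ] A) :=
  have := Algebra.FiniteType.isNoetherianRing ℚ (ℚ ⊗[ℤ] A)
  have : IsArtinianRing (ℚ ⊗[ℤ] A) :=
    isArtinianRing_iff_isNoetherianRing_krullDimLE_zero.mpr ⟨inferInstance, inferInstance⟩
  Module.finite_of_isArtinianRing ℚ _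

theorem finite_ringHom_of_krullDimLE_one (K : Type*) [Field K] [CharZero K] :
    Finite (A →+* K) := by
  let extend (φ : A →+* K) : ℚ ⊗[ℤ] A →ₐ[ℚ] K :=
    (Algebra.TensorProduct.productMap ((Algebra.ofId ℚ K).restrictScalars ℤ)
      φ.toIntAlgHom).toRingHom.toRatAlgHom
  refine Finite.of_injective extend fun φ ψ h ↦ RingHom.ext fun a ↦ ?_
  simpa [extend] using congr($h (1 ⊗ₜ a))

end RationalTensor

namespace AlgebraicGeometry

lemma finiteType_int_of_locallyOfFiniteType {R : CommRingCat} (g : Spec R ⟶ Spec (.of ℤ))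
    [LocallyOfFiniteType g] : Algebra.FiniteType ℤ R := by
  obtain ⟨φ, rfl⟩ := Spec.map_surjective g
  have : φ.hom.FiniteType := HasRingHomProperty.Spec_iff.mp ‹_›
  rwa [RingHom.FiniteType, Subsingleton.elim φ.hom.toAlgebra] at this

lemma finite_hom_of_isAffine {Y : Scheme} [IsAffine Y] (K : Type) [Field K] [CharZero K]
    (g : Y ⟶ Spec (.of ℤ)) [LocallyOfFiniteType g] (hdim : topologicalKrullDim Y ≤ 1) :
    Finite (Spec (.of K) ⟶ Y) := by
  have := finiteType_int_of_locallyOfFiniteType (Y.isoSpec.inv ≫ g)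
  have : Ring.KrullDimLE 1 Γ(Y, ⊤) := by
    rw [Ring.krullDimLE_iff, ← PrimeSpectrum.topologicalKrullDim_eq_ringKrullDim]
    exact ((Scheme.homeoOfIso Y.isoSpec.symm).isHomeomorph.topologicalKrullDim_eq).trans_le hdim
  have := finite_ringHom_of_krullDimLE_one Γ(Y, ⊤) K
  refine Finite.of_injective (fun g ↦ (Spec.homEquiv (g ≫ Y.isoSpec.hom)).hom) fun g₁ g₂ h ↦ ?_
  simpa using Spec.homEquiv.injective (CommRingCat.hom_ext h)

lemma finite_hom_of_openCover {T X : Scheme} [Unique T] (𝒰 : X.OpenCover) [Finite 𝒰.I₀]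
    (h𝒰 : ∀ i, Finite (T ⟶ 𝒰.X i)) : Finite (T ⟶ X) := by
  have hrange (g : T ⟶ X) : Set.range g ⊆ Set.range (𝒰.f (𝒰.idx (g default))) := by
    rintro _ ⟨t, rfl⟩
    rw [Subsingleton.elim t default]
    exact 𝒰.covers _
  let lift (g : T ⟶ X) : Σ i, T ⟶ 𝒰.X i := ⟨_, IsOpenImmersion.lift _ g (hrange g)⟩
  have lift_fac (g : T ⟶ X) : (lift g).2 ≫ 𝒰.f (lift g).1 = g := IsOpenImmersion.lift_fac ..
  refine Finite.of_injective lift fun g₁ g₂ h ↦ ?_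
  rw [← lift_fac g₁, ← lift_fac g₂, h]

end AlgebraicGeometry

/-- For an arithmetic scheme `X` of Krull dimension at most one, the set `X(ℂ)` of
scheme morphisms `Spec ℂ → X` is finite. -/
theorem complex_points_finite_of_one_dimensional_arithmetic_scheme
    (X : Scheme.{0}) (hX : IsArithmeticScheme X) (hdim : topologicalKrullDim X ≤ 1) :
    Finite (Spec (CommRingCat.of ℂ) ⟶ X) := by
  obtain ⟨f, -, _, _⟩ := hX
  have : CompactSpace X := QuasiCompact.compactSpace_of_compactSpace f
  let 𝒰 := X.affineCover.finiteSubcover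
  refine finite_hom_of_openCover 𝒰 fun i ↦ finite_hom_of_isAffine ℂ (𝒰.f i ≫ f) ?_
  exact (𝒰.f i).isOpenEmbedding.isInducing.topologicalKrullDim_le.trans hdim
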